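/- arXiv:1805.09053 — 2 statements merged into one kernel-verified Lean document; each statement's English description precedes it below -/
import Mathlib

section
/- Let F be a field containing a primitive n-th root of unity ω, and let e_0,…,e_{n−1} be the rows of the associated n×n Fourier matrix. Let S ⊆ {0,1,…,n−1} and let C be the code spanned by the rows {e_i : i ∈ S}. If C contains its Euclidean dual (C^⊥ ⊆ C), then every index i ∈ {0,…,n−1} with 2i ≡ 0 (mod n) belongs to S; in particular 0 ∈ S, and n/2 ∈ S when n is even. -/
/-!
Row `i` of the Fourier matrix is orthogonal to row `j` unless `n ∣ i + j`, since otherwise their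
inner product is a full geometric sum of the nontrivial `n`-th root of unity `ω ^ (i + j)`.
If `2i ≡ 0` and `i ∉ S`, then `e_i` is orthogonal to every generator of `C`, hence lies in
`C^⊥ ⊆ C` and is self-orthogonal; but `⟨e_i, e_i⟩ = n`, which is nonzero in `F` because
`F` has a primitive `n`-th root of unity.
-/

open Finset Matrix

theorem Nat.eq_of_dvd_two_mul_of_dvd_add {n i j : ℕ} (hi : i < n) (hj : j < n)
    (h2i : n ∣ 2 * i) (hij : n ∣ i + j) : i = j := by
  have hmod : i + i ≡ i + j [MOD n] :=
    (Nat.modEq_zero_iff_dvd.2 (two_mul i ▸ h2i)).trans (Nat.modEq_zero_iff_dvd.2 hij).symm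
  exact (Nat.ModEq.add_left_cancel' i hmod).eq_of_lt_of_lt hi hj

theorem geom_sum_eq_zero_of_pow_eq_one {F : Type*} [Field F] {ζ : F} {n : ℕ}
    (hζn : ζ ^ n = 1) (hζ : ζ ≠ 1) : ∑ k ∈ range n, ζ ^ k = 0 := by
  rw [geom_sum_eq hζ, hζn, sub_self, zero_div]

theorem IsPrimitiveRoot.sum_pow_mul_pow {F : Type*} [Field F] {ω : F} {n : ℕ}
    (hω : IsPrimitiveRoot ω n) (i j : ℕ) :
    ∑ x : Fin n, ω ^ (i * x.val) * ω ^ (j * x.val) = if n ∣ i + j then (n : F) else 0 := by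
  have hpow : ∀ x : Fin n, ω ^ (i * x.val) * ω ^ (j * x.val) = (ω ^ (i + j)) ^ x.val :=
    fun x => by rw [← pow_add, ← pow_mul, add_mul]
  simp_rw [hpow, Fin.sum_univ_eq_sum_range (fun k => (ω ^ (i + j)) ^ k)]
  split_ifs with hdvd
  · simp [(hω.pow_eq_one_iff_dvd _).2 hdvd]
  · refine geom_sum_eq_zero_of_pow_eq_one ?_ (mt (hω.pow_eq_one_iff_dvd _).1 hdvd)
    rw [← pow_mul, mul_comm, pow_mul, hω.pow_eq_one, one_pow]

theorem dotProduct_eq_zero_of_mem_span {ι R : Type*} [Fintype ι] [CommSemiring R]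
    {s : Set (ι → R)} {w v : ι → R} (hw : ∀ u ∈ s, w ⬝ᵥ u = 0)
    (hv : v ∈ Submodule.span R s) : w ⬝ᵥ v = 0 := by
  induction hv using Submodule.span_induction with
  | mem u hu => exact hw u hu
  | zero => exact dotProduct_zero w
  | add u u' _ _ hu hu' => rw [dotProduct_add, hu, hu', add_zero]
  | smul c u _ hu => rw [dotProduct_smul, hu, smul_zero]

/-- If the code generated by the rows `{e_i : i ∈ S}` of the Fourier matrix contains
its Euclidean dual, then every index `i` with `2i ≡ 0 (mod n)` lies in `S`; in
particular `0 ∈ S`, and `n/2 ∈ S` when `n` is even. -/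
theorem fourier_dual_containing_mandatory_rows
    {F : Type*} [Field F] {n : ℕ} (hn : 0 < n)
    {ω : F} (hω : orderOf ω = n)
    (e : Fin n → Fin n → F)
    (he : ∀ i j : Fin n, e i j = ω ^ (i.val * j.val))
    (S : Set (Fin n))
    (C : Submodule F (Fin n → F))
    (hC : C = Submodule.span F (e '' S))
    (hdual : {u : Fin n → F | ∀ v ∈ C, (∑ x, u x * v x) = 0} ⊆ (C : Set (Fin n → F))) :
    (∀ i : Fin n, (2 * i.val) % n = 0 → i ∈ S) ∧
      (⟨0, hn⟩ : Fin n) ∈ S ∧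
      (2 ∣ n → (⟨n / 2, by omega⟩ : Fin n) ∈ S) := by
  have hprim : IsPrimitiveRoot ω n := hω ▸ IsPrimitiveRoot.orderOf ω
  have : NeZero n := NeZero.of_pos hn
  have hdot (i j : Fin n) : e i ⬝ᵥ e j = if n ∣ i.val + j.val then (n : F) else 0 := by
    simp only [dotProduct, he, hprim.sum_pow_mul_pow]
  have key : ∀ i : Fin n, (2 * i.val) % n = 0 → i ∈ S := by
    intro i hi
    by_contra hiS
    have h2i : n ∣ 2 * i.val := Nat.dvd_of_mod_eq_zero hi
    have horth : ∀ v ∈ C, e i ⬝ᵥ v = 0 := by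
      refine fun v hv => dotProduct_eq_zero_of_mem_span ?_ (hC ▸ hv)
      rintro _ ⟨j, hjS, rfl⟩
      have hij : ¬ n ∣ i.val + j.val := fun hdvd =>
        hiS (Fin.ext (Nat.eq_of_dvd_two_mul_of_dvd_add i.isLt j.isLt h2i hdvd) ▸ hjS)
      rw [hdot, if_neg hij]
    have hself := horth _ (hdual horth)
    rw [hdot, if_pos (two_mul i.val ▸ h2i)] at hself
    exact hprim.neZero'.out hself
  refine ⟨key, key _ (by simp), fun ⟨m, hm⟩ => key _ ?_⟩
  simp [hm]
end

section
/- Let q be a prime power, let F be a finite field with q^2 elements, and let ω ∈ F be a primitive n-th root of unity with rows e_0,…,e_{n−1} of the associated n×n Fourier matrix. For S ⊆ {0,…,n−1}, let C be the code spanned by {e_i : i ∈ S}. Then the Hermitian dual C^{⊥H} equals the span of those rows e_j for which the index (−jq mod n) does not belong to S. -/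
/-!
The rows `e_i = (ω ^ (i x))ₓ` form a basis (their matrix is Vandermonde in the distinct nodes
`ω ^ i`), and their Hermitian pairings form `n` times a permutation matrix:
`∑ₓ e_j(x) e_i(x) ^ q` is `n` if `j + i q ≡ 0 (mod n)` and `0` otherwise. This relation is
symmetric in `i` and `j` because `n ∣ q ^ 2 - 1`. Since `v ↦ v ^ q` is additive, `u = ∑ c_j e_j`
is orthogonal to `C` iff it is orthogonal to each `e_i` with `i ∈ S`, i.e. iff `n c_j = 0` for
the `j` with `j + i q ≡ 0`; and `n ≠ 0` in `F`.
-/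

open Finset

theorem Fin.exists_dvd_val_add (n : ℕ) [NeZero n] (a : ℕ) : ∃ j : Fin n, n ∣ j.val + a :=
  ⟨⟨(-(a : ZMod n)).val, ZMod.val_lt _⟩, by simp [← ZMod.natCast_eq_zero_iff]⟩

theorem Fin.eq_of_dvd_val_add {n a : ℕ} {j j' : Fin n} (h : n ∣ j.val + a)
    (h' : n ∣ j'.val + a) : j = j' :=
  Fin.ext <| Nat.ModEq.eq_of_lt_of_lt (Nat.ModEq.add_right_cancel' a <|
    (Nat.modEq_zero_iff_dvd.2 h).trans (Nat.modEq_zero_iff_dvd.2 h').symm) j.isLt j'.isLt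

theorem Nat.dvd_add_mul_comm_of_sq_modEq_one {n i j q : ℕ} (hq : q ^ 2 ≡ 1 [MOD n])
    (h : n ∣ j + i * q) : n ∣ i + j * q := by
  rw [← ZMod.natCast_eq_natCast_iff] at hq
  rw [← ZMod.natCast_eq_zero_iff] at h ⊢
  push_cast at hq h ⊢
  linear_combination (q : ZMod n) * h - (i : ZMod n) * hq

theorem forall_mem_span_sum_mul_pow_eq_zero_iff {R ι : Type*} [CommSemiring R] [Fintype ι]
    {p : ℕ} [ExpChar R p] (k : ℕ) {u : ι → R} {s : Set (ι → R)} :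
    (∀ v ∈ Submodule.span R s, ∑ x, u x * v x ^ p ^ k = 0) ↔
      ∀ v ∈ s, ∑ x, u x * v x ^ p ^ k = 0 := by
  refine ⟨fun h v hv => h v (Submodule.subset_span hv), fun h v hv => ?_⟩
  induction hv using Submodule.span_induction with
  | mem v hv => exact h v hv
  | zero => simp [zero_pow (expChar_pow_pos R p k).ne']
  | add v w _ _ hv hw => simp [add_pow_expChar_pow, mul_add, sum_add_distrib, hv, hw]
  | smul c v _ hv => simp only [Pi.smul_apply, smul_eq_mul, mul_pow, mul_left_comm _ (c ^ _),
      ← mul_sum, hv, mul_zero]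

section FourierRow

variable {R : Type*} [CommRing R] [IsDomain R] {ω : R} {n : ℕ}

theorem IsPrimitiveRoot.sum_fin_pow_mul (hω : IsPrimitiveRoot ω n) (m : ℕ) :
    ∑ x : Fin n, ω ^ (m * x.val) = if n ∣ m then (n : R) else 0 := by
  rw [Fin.sum_univ_eq_sum_range (fun x => ω ^ (m * x))]
  simp_rw [pow_mul]
  split_ifs with h
  · simp [(hω.pow_eq_one_iff_dvd m).2 h]
  · have hne : ω ^ m ≠ 1 := (hω.pow_eq_one_iff_dvd m).not.2 h
    refine eq_zero_of_ne_zero_of_mul_left_eq_zero (sub_ne_zero_of_ne hne.symm) ?_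
    rw [mul_neg_geom_sum, ← pow_mul, mul_comm, pow_mul, hω.pow_eq_one, one_pow, sub_self]

def fourierRow (ω : R) (n : ℕ) (i j : Fin n) : R :=
  ω ^ (i.val * j.val)

theorem IsPrimitiveRoot.linearIndependent_fourierRow (hω : IsPrimitiveRoot ω n) :
    LinearIndependent R (fourierRow ω n) := by
  have hV : Matrix.vandermonde (fun i : Fin n => ω ^ i.val) = Matrix.of (fourierRow ω n) := by
    ext i j
    simp [fourierRow, Matrix.vandermonde_apply, pow_mul]
  have hdet := Matrix.det_vandermonde_ne_zero_iff.2 fun i j hij =>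
    Fin.ext (hω.pow_inj i.isLt j.isLt hij)
  rw [hV] at hdet
  exact Matrix.linearIndependent_rows_of_det_ne_zero hdet

theorem IsPrimitiveRoot.sum_fourierRow_mul_pow (hω : IsPrimitiveRoot ω n) (q : ℕ)
    (i j : Fin n) :
    ∑ x, fourierRow ω n j x * fourierRow ω n i x ^ q =
      if n ∣ j.val + i.val * q then (n : R) else 0 := by
  rw [← hω.sum_fin_pow_mul]
  refine sum_congr rfl fun x _ => ?_
  simp only [fourierRow, ← pow_mul, ← pow_add]
  ring_nf

end FourierRow

section FourierBasis

variable {F : Type*} [Field F] {ω : F} {n : ℕ}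

theorem IsPrimitiveRoot.card_modEq_one [Fintype F] [NeZero n] (hω : IsPrimitiveRoot ω n) :
    Fintype.card F ≡ 1 [MOD n] :=
  ((Nat.modEq_iff_dvd' Fintype.card_pos).2 <| (hω.pow_eq_one_iff_dvd _).1 <|
    FiniteField.pow_card_sub_one_eq_one ω (hω.ne_zero (NeZero.ne n))).symm

noncomputable def IsPrimitiveRoot.fourierBasis (hω : IsPrimitiveRoot ω n) :
    Module.Basis (Fin n) F (Fin n → F) :=
  basisOfLinearIndependentOfCardEqFinrank' _ hω.linearIndependent_fourierRow (by simp)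

@[simp]
theorem IsPrimitiveRoot.coe_fourierBasis (hω : IsPrimitiveRoot ω n) :
    ⇑hω.fourierBasis = fourierRow ω n :=
  coe_basisOfLinearIndependentOfCardEqFinrank' ..

theorem IsPrimitiveRoot.sum_mul_fourierRow_pow (hω : IsPrimitiveRoot ω n) {q : ℕ}
    (u : Fin n → F) {i j : Fin n} (hij : n ∣ j.val + i.val * q) :
    ∑ x, u x * fourierRow ω n i x ^ q = n * hω.fourierBasis.repr u j := by
  set c := hω.fourierBasis.repr u
  calc ∑ x, u x * fourierRow ω n i x ^ q
      = ∑ j', c j' * ∑ x, fourierRow ω n j' x * fourierRow ω n i x ^ q := by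
        conv_lhs => rw [← hω.fourierBasis.sum_repr u]
        simp only [Finset.sum_apply, Pi.smul_apply, smul_eq_mul, sum_mul, mul_sum,
          coe_fourierBasis, mul_assoc]
        exact sum_comm
    _ = c j * n := by
        rw [sum_eq_single j]
        · rw [hω.sum_fourierRow_mul_pow, if_pos hij]
        · intro j' _ hj'
          rw [hω.sum_fourierRow_mul_pow, if_neg fun h => hj' (Fin.eq_of_dvd_val_add h hij),
            mul_zero]
        · simp
    _ = n * c j := mul_comm _ _

theorem IsPrimitiveRoot.forall_sum_mul_fourierRow_pow_eq_zero_iff [NeZero n]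
    (hω : IsPrimitiveRoot ω n) {q : ℕ} (hq : q ^ 2 ≡ 1 [MOD n]) (S : Set (Fin n))
    (u : Fin n → F) :
    (∀ i ∈ S, ∑ x, u x * fourierRow ω n i x ^ q = 0) ↔
      u ∈ Submodule.span F
        (fourierRow ω n '' {j | ∀ i : Fin n, n ∣ i.val + j.val * q → i ∉ S}) := by
  have hn : (n : F) ≠ 0 := hω.neZero'.out
  conv_rhs => rw [← hω.coe_fourierBasis, Module.Basis.mem_span_image]
  constructor
  · intro h j hj i hij hiS
    have hpair := h i hiS
    rw [hω.sum_mul_fourierRow_pow u (Nat.dvd_add_mul_comm_of_sq_modEq_one hq hij)] at hpair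
    exact Finsupp.mem_support_iff.1 hj ((mul_eq_zero.1 hpair).resolve_left hn)
  · intro h i hiS
    obtain ⟨j, hj⟩ := Fin.exists_dvd_val_add n (i.val * q)
    rw [hω.sum_mul_fourierRow_pow u hj, mul_eq_zero, or_iff_not_imp_right]
    exact fun hc => absurd hiS <|
      h (Finsupp.mem_support_iff.2 hc) i (Nat.dvd_add_mul_comm_of_sq_modEq_one hq hj)

end FourierBasis

/-- Over `GF(q²)`, the Hermitian dual of the code generated by the rows
`{e_i : i ∈ S}` of the Fourier matrix is generated by those rows `e_j` for which the
index `-jq (mod n)` does not belong to `S`. -/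
theorem fourier_code_hermitian_dual
    {q : ℕ} (hq : IsPrimePow q)
    {F : Type*} [Field F] [Fintype F] (hF : Fintype.card F = q ^ 2)
    {n : ℕ} (hn : 0 < n) {ω : F} (hω : orderOf ω = n)
    (e : Fin n → Fin n → F)
    (he : ∀ i j : Fin n, e i j = ω ^ (i.val * j.val))
    (S : Set (Fin n))
    (C : Submodule F (Fin n → F))
    (hC : C = Submodule.span F (e '' S))
    (D : Submodule F (Fin n → F))
    (hD : D = Submodule.span F
      (e '' {j : Fin n | ∀ i : Fin n, (i.val + j.val * q) % n = 0 → i ∉ S})) :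
    {u : Fin n → F | ∀ v ∈ C, (∑ x, u x * (v x) ^ q) = 0} = (D : Set (Fin n → F)) := by
  obtain ⟨p, k, hp, -, rfl⟩ := hq
  have : Fact p.Prime := ⟨Nat.prime_iff.2 hp⟩
  have : CharP F p := charP_of_card_eq_prime_pow (hF.trans (pow_mul p k 2).symm)
  have : NeZero n := ⟨hn.ne'⟩
  replace hω : IsPrimitiveRoot ω n := hω ▸ IsPrimitiveRoot.orderOf ω
  have hq2 : (p ^ k) ^ 2 ≡ 1 [MOD n] := hF ▸ hω.card_modEq_one
  obtain rfl : e = fourierRow ω n := funext₂ he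
  subst hC hD
  ext u
  simp_rw [Set.mem_ofPred_eq, SetLike.mem_coe, forall_mem_span_sum_mul_pow_eq_zero_iff,
    Set.forall_mem_image, ← Nat.dvd_iff_mod_eq_zero]
  exact hω.forall_sum_mul_fourierRow_pow_eq_zero_iff hq2 S u
end
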